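/- arXiv:2309.03656 — 6 statements merged into one kernel-verified Lean document; each statement's English description precedes it below -/
import Mathlib

section
/- Let r be an odd positive integer, s an odd integer coprime to r with 0 < s < r, and q = exp(iπs/r). Define the quantum integer [n] = (q^n - q^{-n})/(q - q^{-1}) for 1 ≤ n ≤ r-1. Then the sign of [n] equals (-1)^⌊ns/r⌋. -/
/-!
With `q = exp(iθ)` and `θ = πs/r`, the quantum integer `[n]` is the real number
`sin(nθ) / sin θ`, and `sin θ > 0` since `0 < s < r`. Writing `ns = r⌊ns/r⌋ + m`, we get
`sin(nθ) = (-1)^⌊ns/r⌋ sin(πm/r)`, and coprimality of `r` and `s` forces `0 < m < r`,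
so `sin(πm/r) > 0`.
-/

open Real

lemma Real.sign_div_of_pos {x y : ℝ} (hy : 0 < y) : Real.sign (x / y) = Real.sign x := by
  rcases lt_trichotomy x 0 with hx | rfl | hx
  · rw [sign_of_neg hx, sign_of_neg (div_neg_of_neg_of_pos hx hy)]
  · rw [zero_div]
  · rw [sign_of_pos hx, sign_of_pos (div_pos hx hy)]

lemma Real.sign_neg_one_pow_mul_of_pos {x : ℝ} (hx : 0 < x) (k : ℕ) :
    Real.sign ((-1) ^ k * x) = (-1) ^ k := by
  rcases k.even_or_odd with hk | hk
  · rw [hk.neg_one_pow, one_mul, sign_of_pos hx]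
  · rw [hk.neg_one_pow, neg_one_mul, sign_neg, sign_of_pos hx]

lemma Real.sin_pi_mul_div_pos {a r : ℕ} (ha : 0 < a) (har : a < r) : 0 < sin (π * a / r) := by
  have hr : (0 : ℝ) < r := by exact_mod_cast ha.trans har
  apply sin_pos_of_pos_of_lt_pi (by positivity)
  rw [div_lt_iff₀ hr]
  have : (a : ℝ) < r := by exact_mod_cast har
  nlinarith [pi_pos]

lemma Real.sin_pi_mul_div_eq_neg_one_pow_mul (a r : ℕ) (hr : 0 < r) :
    sin (π * a / r) = (-1) ^ (a / r) * sin (π * (a % r : ℕ) / r) := by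
  have hr' : (r : ℝ) ≠ 0 := by positivity
  have hdecomp : π * a / r = π * (a % r : ℕ) / r + (a / r : ℕ) * π := by
    have ha : (a : ℝ) = (a % r : ℕ) + r * (a / r : ℕ) := by
      exact_mod_cast (Nat.mod_add_div a r).symm
    rw [ha]
    field_simp
  rw [hdecomp, sin_add_nat_mul_pi]

lemma Real.sign_sin_pi_mul_div (a r : ℕ) (hr : 0 < r) (ha : ¬ r ∣ a) :
    Real.sign (sin (π * a / r)) = (-1) ^ (a / r) := by
  rw [sin_pi_mul_div_eq_neg_one_pow_mul a r hr]
  exact sign_neg_one_pow_mul_of_pos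
    (sin_pi_mul_div_pos (Nat.pos_of_ne_zero (mt Nat.dvd_of_mod_eq_zero ha)) (Nat.mod_lt a hr)) _

open Complex in
lemma Complex.exp_mul_I_pow_sub_inv_pow (θ : ℝ) (n : ℕ) :
    exp (θ * I) ^ n - (exp (θ * I))⁻¹ ^ n = 2 * Real.sin (n * θ) * I := by
  rw [← exp_neg, ← exp_nat_mul, ← exp_nat_mul, ofReal_sin, ofReal_mul, ofReal_natCast,
    show (n : ℂ) * (θ * I) = (n * θ) * I by ring, show (n : ℂ) * -(θ * I) = -(n * θ) * I by ring,
    exp_mul_I, exp_mul_I, cos_neg, sin_neg]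
  ring

open Complex in
lemma Complex.exp_mul_I_pow_sub_inv_pow_div (θ : ℝ) (hθ : Real.sin θ ≠ 0) (n : ℕ) :
    (exp (θ * I) ^ n - (exp (θ * I))⁻¹ ^ n) / (exp (θ * I) - (exp (θ * I))⁻¹)
      = ((Real.sin (n * θ) / Real.sin θ : ℝ) : ℂ) := by
  have h1 := exp_mul_I_pow_sub_inv_pow θ 1
  rw [pow_one, pow_one, Nat.cast_one, one_mul] at h1
  have hθ' : (Real.sin θ : ℂ) ≠ 0 := by exact_mod_cast hθ
  rw [exp_mul_I_pow_sub_inv_pow, h1, ofReal_div]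
  field_simp

theorem stmt0_general (r s : ℕ) (hco : Nat.Coprime s r)
    (hs0 : 0 < s) (hsr : s < r)
    (q : ℂ) (hq : q = Complex.exp (Complex.I * Real.pi * s / r))
    (n : ℕ) (hn1 : 1 ≤ n) (hn2 : n ≤ r - 1) :
    ((q ^ n - q⁻¹ ^ n) / (q - q⁻¹)).im = 0 ∧
      Real.sign (((q ^ n - q⁻¹ ^ n) / (q - q⁻¹)).re) = (-1) ^ ((n * s) / r) := by
  have hr : 0 < r := hs0.trans hsr
  have hq' : q = Complex.exp ((π * s / r : ℝ) * Complex.I) := by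
    rw [hq]; push_cast; ring_nf
  have hsinθ : 0 < sin (π * s / r) := sin_pi_mul_div_pos hs0 hsr
  have hndvd : ¬ r ∣ n * s := fun h ↦ by
    have := Nat.le_of_dvd (by omega) (hco.symm.dvd_of_dvd_mul_right h)
    omega
  have hnθ : (n : ℝ) * (π * s / r) = π * (n * s : ℕ) / r := by push_cast; ring
  rw [hq', Complex.exp_mul_I_pow_sub_inv_pow_div _ hsinθ.ne', Complex.ofReal_im,
    Complex.ofReal_re, sign_div_of_pos hsinθ, hnθ, sign_sin_pi_mul_div _ _ hr hndvd]
  exact ⟨rfl, rfl⟩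

/-- for `q = exp(iπs/r)` with `r, s` odd coprime, `0 < s < r`, the quantum
integer `[n] = (q^n - q^{-n})/(q - q^{-1})` is real and its sign is `(-1)^⌊ns/r⌋`. -/
theorem stmt0 (r s : ℕ) (hr : Odd r) (hs : Odd s) (hco : Nat.Coprime s r)
    (hs0 : 0 < s) (hsr : s < r)
    (q : ℂ) (hq : q = Complex.exp (Complex.I * Real.pi * s / r))
    (n : ℕ) (hn1 : 1 ≤ n) (hn2 : n ≤ r - 1) :
    ((q ^ n - q⁻¹ ^ n) / (q - q⁻¹)).im = 0 ∧
      Real.sign (((q ^ n - q⁻¹ ^ n) / (q - q⁻¹)).re) = (-1) ^ ((n * s) / r) :=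
  stmt0_general r s hco hs0 hsr q hq n hn1 hn2
end

section
/- Let r be odd, s odd coprime to r with 0 < s < r, ε_n = (-1)^⌊ns/r⌋, and let P_n be defined by P_0 = 1, P_1 = X, P_{n+1} = XP_n + ε_n ε_{n+1} P_{n-1}. Let R(x) be the Riley polynomial of the two-bridge knot K(r,s), i.e. the upper-left entry of the matrix product [[1,1],[0,1]]^{ε_1} [[1,0],[x,1]]^{ε_2} [[1,1],[0,1]]^{ε_3} ⋯ [[1,0],[x,1]]^{ε_{r-1}} over ℚ[x]. Then P_{r-1}(X) = R(X^2). -/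
/-!
Twisting by signs, `Q_n = ε_1 ⋯ ε_n P_n` satisfies `Q_{n+1} = ε_{n+1} X Q_n + Q_{n-1}`, so
`Q_n` is the continuant `K(ε_1 X, …, ε_n X)`, the `(0,0)` entry of `∏ [[ε_k X, 1], [1, 0]]`.
Since `[[1, a], [0, 1]] [[1, 0], [b, 1]] = [[a, 1], [1, 0]] [[b, 1], [1, 0]]` and `r - 1` is even,
this is also the `(0,0)` entry of the alternating product of `[[1, ε_k X], [0, 1]]` and
`[[1, 0], [ε_k X, 1]]`, and conjugating by `diag(X, 1)` turns that product into the Riley product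
at `x = X²` without changing the `(0,0)` entry. Finally `ε_1 ⋯ ε_{r-1} = 1`: pairing `k` with
`r - k` gives `⌊ks/r⌋ + ⌊(r-k)s/r⌋ = s - 1`, so the exponent sum is `(r-1)(s-1)/2`, which is
even.
-/

open Polynomial

theorem Nat.mul_div_add_sub_mul_div_eq_sub_one {r s k : ℕ} (hco : Nat.Coprime s r)
    (hk0 : 0 < k) (hkr : k < r) : k * s / r + (r - k) * s / r = s - 1 := by
  have hr0 : 0 < r := hk0.trans hkr
  have hsum : k * s + (r - k) * s = r * s := by
    rw [← Nat.add_mul, Nat.add_sub_cancel' hkr.le]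
  have hmod : 0 < k * s % r := by
    refine Nat.pos_of_ne_zero fun h => ?_
    have : r ∣ k := hco.symm.dvd_of_dvd_mul_right (Nat.dvd_of_mod_eq_zero h)
    exact absurd (Nat.le_of_dvd hk0 this) (by omega)
  have hcarry : r ≤ k * s % r + (r - k) * s % r := by
    refine Nat.le_of_dvd (by omega) ?_
    rw [Nat.dvd_iff_mod_eq_zero, ← Nat.add_mod, hsum, Nat.mul_mod_right]
  have h := Nat.add_div_eq_of_le_mod_add_mod hcarry hr0
  rw [hsum, Nat.mul_div_cancel_left s hr0] at h
  exact (Nat.sub_eq_of_eq_add h).symm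

theorem two_mul_sum_range_succ_mul_div {r s : ℕ} (hco : Nat.Coprime s r) :
    2 * ∑ k ∈ Finset.range (r - 1), (k + 1) * s / r = (r - 1) * (s - 1) := by
  set f : ℕ → ℕ := fun k => (k + 1) * s / r
  calc 2 * ∑ k ∈ Finset.range (r - 1), f k
      = ∑ k ∈ Finset.range (r - 1), (f k + f (r - 1 - 1 - k)) := by
        rw [Finset.sum_add_distrib, Finset.sum_range_reflect f]; ring
    _ = ∑ k ∈ Finset.range (r - 1), (s - 1) := by
        refine Finset.sum_congr rfl fun k hk => ?_
        rw [Finset.mem_range] at hk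
        simp only [f]
        rw [show r - 1 - 1 - k + 1 = r - (k + 1) by omega]
        exact Nat.mul_div_add_sub_mul_div_eq_sub_one hco (by omega) (by omega)
    _ = (r - 1) * (s - 1) := by simp

theorem prod_range_neg_one_pow_succ_mul_div {r s : ℕ} (hr : Odd r) (hs : Odd s)
    (hco : Nat.Coprime s r) :
    ∏ k ∈ Finset.range (r - 1), (-1 : ℤ) ^ ((k + 1) * s / r) = 1 := by
  rw [Finset.prod_pow_eq_pow_sum]
  refine Even.neg_one_pow (even_iff_two_dvd.mpr ?_)
  obtain ⟨a, rfl⟩ := hr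
  obtain ⟨b, rfl⟩ := hs
  have h := two_mul_sum_range_succ_mul_div hco
  rw [show (2 * a + 1 - 1) * (2 * b + 1 - 1) = 2 * (2 * (a * b)) by
    simp only [Nat.add_sub_cancel]; ring] at h
  exact ⟨a * b, Nat.eq_of_mul_eq_mul_left two_pos h⟩

section Continuant

variable {R : Type*} [CommRing R]

/-- `continuant c n` is the continuant `K(c 0, …, c (n - 1))`. -/
def continuant (c : ℕ → R) : ℕ → R
  | 0 => 1
  | 1 => c 0
  | n + 2 => c (n + 1) * continuant c (n + 1) + continuant c n

theorem continuant_eq_prod_apply_zero_zero (c : ℕ → R) (n : ℕ) :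
    continuant c n = ((List.range n).map fun k => !![c k, 1; 1, 0]).prod 0 0 := by
  suffices h : ∀ n, ((List.range (n + 1)).map fun k => !![c k, 1; 1, 0]).prod 0 0 =
      continuant c (n + 1) ∧
      ((List.range (n + 1)).map fun k => !![c k, 1; 1, 0]).prod 0 1 = continuant c n by
    cases n with
    | zero => simp [continuant]
    | succ n => exact (h n).1.symm
  intro n
  induction n with
  | zero => simp [continuant]
  | succ n ih =>
    rw [List.range_succ, List.map_append, List.prod_append]
    simp [Matrix.mul_apply, Fin.sum_univ_two, ih.1, ih.2, continuant, mul_comm]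

theorem prod_mul_eq_continuant {e : ℕ → R} (he : ∀ n, e n * e n = 1) (x : R) {P : ℕ → R}
    (hP0 : P 0 = 1) (hP1 : P 1 = x)
    (hrec : ∀ n, P (n + 2) = x * P (n + 1) + e (n + 1) * e (n + 2) * P n) :
    ∀ n, (∏ k ∈ Finset.range n, e (k + 1)) * P n = continuant (fun k => e (k + 1) * x) n
  | 0 => by simp [hP0, continuant]
  | 1 => by simp [hP1, continuant]
  | n + 2 => by
    rw [continuant, ← prod_mul_eq_continuant he x hP0 hP1 hrec (n + 1),
      ← prod_mul_eq_continuant he x hP0 hP1 hrec n, hrec, Finset.prod_range_succ,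
      Finset.prod_range_succ]
    linear_combination (∏ k ∈ Finset.range n, e (k + 1)) * P n *
      (e (n + 2) * e (n + 2) * he (n + 1) + he (n + 2))

def alternatingProd (a b : ℕ → R) (n : ℕ) : Matrix (Fin 2) (Fin 2) R :=
  ((List.range n).map fun k =>
    if (k + 1) % 2 = 1 then !![1, a k; 0, 1] else !![1, 0; b k, 1]).prod

theorem alternatingProd_zero (a b : ℕ → R) : alternatingProd a b 0 = 1 := rfl

theorem alternatingProd_succ (a b : ℕ → R) (n : ℕ) :
    alternatingProd a b (n + 1) = alternatingProd a b n *
      if (n + 1) % 2 = 1 then !![1, a n; 0, 1] else !![1, 0; b n, 1] := by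
  simp [alternatingProd, List.range_succ]

theorem alternatingProd_two_mul (c : ℕ → R) (m : ℕ) :
    alternatingProd c c (2 * m) =
      ((List.range (2 * m)).map fun k => !![c k, 1; 1, 0]).prod := by
  induction m with
  | zero => rfl
  | succ m ih =>
    have hU : (2 * m + 1) % 2 = 1 := by omega
    have hL : ¬(2 * m + 1 + 1) % 2 = 1 := by omega
    rw [show 2 * (m + 1) = 2 * m + 1 + 1 by ring, alternatingProd_succ, alternatingProd_succ,
      if_pos hU, if_neg hL, ih, List.range_succ, List.range_succ]
    simp only [List.map_append, List.prod_append, List.map_cons, List.map_nil, List.prod_cons,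
      List.prod_nil, mul_one, mul_assoc]
    congr 1
    ext i j
    fin_cases i <;> fin_cases j <;> simp [Matrix.mul_apply, Fin.sum_univ_two, add_comm]

theorem map_alternatingProd {S : Type*} [CommRing S] (φ : R →+* S) (a b : ℕ → R) (n : ℕ) :
    (alternatingProd a b n).map φ = alternatingProd (φ ∘ a) (φ ∘ b) n := by
  induction n with
  | zero => simp [alternatingProd_zero]
  | succ n ih =>
    rw [alternatingProd_succ, alternatingProd_succ, Matrix.map_mul, ih]
    congr 1
    split_ifs <;> ext i j <;> fin_cases i <;> fin_cases j <;> simp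

theorem diagonal_mul_alternatingProd (x : R) (a b : ℕ → R) (n : ℕ) :
    !![x, 0; 0, 1] * alternatingProd a (fun k => b k * x) n =
      alternatingProd (fun k => a k * x) b n * !![x, 0; 0, 1] := by
  induction n with
  | zero => simp [alternatingProd_zero]
  | succ n ih =>
    rw [alternatingProd_succ, alternatingProd_succ, ← mul_assoc, ih, mul_assoc, mul_assoc]
    congr 1
    split_ifs <;> ext i j <;> fin_cases i <;> fin_cases j <;>
      simp [Matrix.mul_apply, Fin.sum_univ_two, mul_comm]

theorem continuant_eq_alternatingProd_comp_X_sq (a : ℕ → R) (m : ℕ) :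
    continuant (fun k => C (a k) * X) (2 * m) =
      (alternatingProd (fun k => C (a k)) (fun k => C (a k) * X) (2 * m) 0 0).comp (X ^ 2) := by
  apply isRegular_X.left
  calc X * continuant (fun k => C (a k) * X) (2 * m)
      = (alternatingProd (fun k => C (a k) * X) (fun k => C (a k) * X) (2 * m) *
          !![X, 0; 0, 1] : Matrix (Fin 2) (Fin 2) R[X]) 0 0 := by
        rw [alternatingProd_two_mul, continuant_eq_prod_apply_zero_zero]
        simp [Matrix.mul_apply, X_mul]
    _ = (!![X, 0; 0, 1] * alternatingProd (fun k => C (a k)) (fun k => C (a k) * X * X)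
          (2 * m) : Matrix (Fin 2) (Fin 2) R[X]) 0 0 := by
        rw [diagonal_mul_alternatingProd]
    _ = (!![X, 0; 0, 1] * (alternatingProd (fun k => C (a k)) (fun k => C (a k) * X)
          (2 * m)).map (expand R 2 : R[X] →+* R[X]) : Matrix (Fin 2) (Fin 2) R[X]) 0 0 := by
        rw [map_alternatingProd]
        simp only [Function.comp_def, AlgHom.coe_toRingHom, map_mul, expand_C, expand_X, sq,
          mul_assoc]
    _ = X * (alternatingProd (fun k => C (a k)) (fun k => C (a k) * X) (2 * m) 0 0).comp
          (X ^ 2) := by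
        simp [Matrix.mul_apply, expand_eq_comp_X_pow]

end Continuant

theorem stmt9_general (r s : ℕ) (hr : Odd r) (hs : Odd s) (hco : Nat.Coprime s r)
    (ε : ℕ → ℤ) (hεdef : ∀ n, ε n = (-1) ^ ((n * s) / r))
    (P : ℕ → Polynomial ℚ) (hP0 : P 0 = 1) (hP1 : P 1 = X)
    (hrec : ∀ n, 1 ≤ n →
      P (n + 1) = X * P n + C ((ε n * ε (n + 1) : ℤ) : ℚ) * P (n - 1)) :
    P (r - 1) =
      ((((List.range (r - 1)).map (fun k =>
          if (k + 1) % 2 = 1 then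
            (!![1, C ((ε (k + 1) : ℚ)); 0, 1] : Matrix (Fin 2) (Fin 2) (Polynomial ℚ))
          else
            !![1, 0; C ((ε (k + 1) : ℚ)) * X, 1])).prod) 0 0).comp (X ^ 2) := by
  have hsq : ∀ n, C (ε n : ℚ) * C (ε n : ℚ) = 1 := fun n => by
    simp only [← C_mul, ← Int.cast_mul, hεdef, ← pow_add, Even.neg_one_pow ⟨_, rfl⟩,
      Int.cast_one, C_1]
  have hsign : ∏ k ∈ Finset.range (r - 1), C (ε (k + 1) : ℚ) = 1 := by
    simp only [← map_prod, ← Int.cast_prod, hεdef,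
      prod_range_neg_one_pow_succ_mul_div hr hs hco, Int.cast_one, C_1]
  have hcont := prod_mul_eq_continuant hsq X hP0 hP1
    (fun n => by simpa using hrec (n + 1) (by omega)) (r - 1)
  rw [hsign, one_mul] at hcont
  obtain ⟨m, hm⟩ : ∃ m, r - 1 = 2 * m := by
    obtain ⟨m, rfl⟩ := hr
    exact ⟨m, by omega⟩
  rw [hcont, hm]
  exact continuant_eq_alternatingProd_comp_X_sq (fun k => (ε (k + 1) : ℚ)) m

/-- with `ε_n = (-1)^⌊ns/r⌋` and `P_n` defined by the recursion
`P_{n+1} = X P_n + ε_n ε_{n+1} P_{n-1}`, `P_0 = 1`, `P_1 = X`, the polynomial `P_{r-1}`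
satisfies `P_{r-1}(X) = R(X²)`, where the Riley polynomial `R` is the upper-left entry of
the product `[[1,1],[0,1]]^{ε_1} [[1,0],[x,1]]^{ε_2} ⋯ [[1,0],[x,1]]^{ε_{r-1}}`
(here `[[1,1],[0,1]]^{±1} = [[1,±1],[0,1]]` and `[[1,0],[x,1]]^{±1} = [[1,0],[±x,1]]`). -/
theorem stmt9 (r s : ℕ) (hr : Odd r) (hs : Odd s) (hco : Nat.Coprime s r)
    (hs0 : 0 < s) (hsr : s < r)
    (ε : ℕ → ℤ) (hεdef : ∀ n, ε n = (-1) ^ ((n * s) / r))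
    (P : ℕ → Polynomial ℚ) (hP0 : P 0 = 1) (hP1 : P 1 = X)
    (hrec : ∀ n, 1 ≤ n →
      P (n + 1) = X * P n + C ((ε n * ε (n + 1) : ℤ) : ℚ) * P (n - 1)) :
    P (r - 1) =
      ((((List.range (r - 1)).map (fun k =>
          if (k + 1) % 2 = 1 then
            (!![1, C ((ε (k + 1) : ℚ)); 0, 1] : Matrix (Fin 2) (Fin 2) (Polynomial ℚ))
          else
            !![1, 0; C ((ε (k + 1) : ℚ)) * X, 1])).prod) 0 0).comp (X ^ 2) :=
  stmt9_general r s hr hs hco ε hεdef P hP0 hP1 hrec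
end

section
/- Let r be odd, s odd coprime to r with 0 < s < r, ε_n = (-1)^⌊ns/r⌋, and P_n defined by the recursion P_{n+1} = XP_n + ε_n ε_{n+1} P_{n-1}, P_0 = 1, P_1 = X over ℚ. Then P_{r-1} has simple roots, i.e. P_{r-1} is squarefree in ℚ[X]. -/
/-!
With `c n = ε n * ε (n + 1)`, a unit of `ℤ`, `P n` is the image in `ℚ[X]` of the integral
continuant `Q n = threeTerm c n`, which is monic and, for even `n = 2m`, a polynomial `S(X²)`.
Modulo 2 every `c n` becomes `1`, so `S mod 2` is the contraction `s_m` of a Fibonacci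
polynomial `F_{2m}` over `𝔽₂`. There the Cassini identity `F_{n+4} F_n + F_{n+2}² = X²`
contracts to `s_{m+2} s_m + s_{m+1}² = X`, whose derivative is a Bézout relation for `s_m` and
`s_m'`. Hence the resultant of `S` and `S'` is nonzero mod 2, so `S` is separable over `ℚ`, and
since `S(0) = ±1` so is `S(X²) = P_{2m}`.
-/

open Polynomial

namespace Polynomial

lemma Monic.separable_map_of_separable_map {R F K : Type*} [CommRing R] [CommRing F]
    [IsDomain F] [Field K] {S : R[X]} (hS : S.Monic) {φ : R →+* F} (hφ : (S.map φ).Separable)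
    {ψ : R →+* K} (hψ : Function.Injective ψ) : (S.map ψ).Separable := by
  have hρ : φ (resultant S (derivative S)) ≠ 0 := by
    -- reduction may lower `deg S'`; padding it back costs a power of the leading coefficient `1`
    obtain ⟨k, hk⟩ := Nat.exists_eq_add_of_le (natDegree_map_le (f := φ) (p := derivative S))
    rw [← resultant_map_map, hk, resultant_add_right_deg _ _ _ _ _ le_rfl,
      ← hS.natDegree_map φ, (hS.map φ).coeff_natDegree, one_pow, one_mul, ← derivative_map]
    exact resultant_ne_zero _ _ hφ
  have hρψ : resultant (S.map ψ) (derivative (S.map ψ)) ≠ 0 := by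
    rw [derivative_map, natDegree_map_eq_of_injective hψ, natDegree_map_eq_of_injective hψ,
      resultant_map_map]
    exact (map_ne_zero_iff ψ hψ).2 fun h ↦ hρ (by rw [h, map_zero])
  by_contra h
  exact hρψ (resultant_eq_zero_iff.2 ⟨Or.inl (hS.map ψ).ne_zero, h⟩)

lemma separable_expand {K : Type*} [Field K] {p : ℕ} (hp : (p : K) ≠ 0) {f : K[X]}
    (hf : f.Separable) (h0 : f.coeff 0 ≠ 0) : (expand K p f).Separable := by
  have hp0 : p ≠ 0 := by rintro rfl; exact hp Nat.cast_zero
  have hX : IsCoprime (expand K p f) X := by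
    rwa [isCoprime_comm, irreducible_X.coprime_iff_not_dvd, X_dvd_iff,
      coeff_expand (Nat.pos_of_ne_zero hp0), if_pos (dvd_zero p), Nat.zero_div]
  rw [Separable, derivative_expand]
  refine ((isCoprime_expand hp0).2 hf).mul_right ?_
  rw [isCoprime_mul_unit_left_right (by rw [← map_natCast C]; exact isUnit_C.2 hp.isUnit)]
  exact hX.pow_right

section ThreeTerm

variable {R S : Type*} [CommRing R] [CommRing S] (c : ℕ → R)

noncomputable def threeTerm : ℕ → R[X]
  | 0 => 1
  | 1 => X
  | n + 2 => X * threeTerm (n + 1) + C (c (n + 1)) * threeTerm n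

@[simp] lemma threeTerm_zero : threeTerm c 0 = 1 := rfl

@[simp] lemma threeTerm_one : threeTerm c 1 = X := rfl

lemma threeTerm_add_two (n : ℕ) :
    threeTerm c (n + 2) = X * threeTerm c (n + 1) + C (c (n + 1)) * threeTerm c n := rfl

variable {c}

lemma eq_threeTerm {Q : ℕ → R[X]} (h0 : Q 0 = 1) (h1 : Q 1 = X)
    (hrec : ∀ n, Q (n + 2) = X * Q (n + 1) + C (c (n + 1)) * Q n) (n : ℕ) :
    Q n = threeTerm c n := by
  induction n using Nat.twoStepInduction with
  | zero => exact h0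
  | one => exact h1
  | more n ih ih' => rw [hrec, ih, ih', threeTerm_add_two]

lemma map_threeTerm (φ : R →+* S) (n : ℕ) : (threeTerm c n).map φ = threeTerm (φ ∘ c) n :=
  eq_threeTerm (Q := fun n ↦ (threeTerm c n).map φ) (by simp) (by simp)
    (fun n ↦ by simp [threeTerm_add_two]) n

lemma natDegree_threeTerm_le (n : ℕ) : (threeTerm c n).natDegree ≤ n := by
  induction n using Nat.twoStepInduction with
  | zero => simp
  | one => exact natDegree_X_le
  | more n ih ih' =>
    rw [threeTerm_add_two]
    refine natDegree_add_le_of_degree_le ?_ ((natDegree_C_mul_le _ _).trans (by omega))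
    exact natDegree_mul_le.trans (by grw [natDegree_X_le, ih']; omega)

lemma coeff_threeTerm_self (n : ℕ) : (threeTerm c n).coeff n = 1 := by
  induction n using Nat.twoStepInduction with
  | zero => simp
  | one => simp
  | more n ih ih' =>
    rw [threeTerm_add_two, coeff_add, coeff_X_mul, ih', coeff_C_mul,
      coeff_eq_zero_of_natDegree_lt ((natDegree_threeTerm_le n).trans_lt (by omega))]
    ring

lemma monic_threeTerm [Nontrivial R] (n : ℕ) : (threeTerm c n).Monic :=
  monic_of_natDegree_le_of_coeff_eq_one n (natDegree_threeTerm_le n) (coeff_threeTerm_self n)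

lemma coeff_threeTerm_eq_zero_of_odd {n k : ℕ} (h : Odd (n + k)) :
    (threeTerm c n).coeff k = 0 := by
  induction n using Nat.twoStepInduction generalizing k with
  | zero => rw [threeTerm_zero, coeff_one, if_neg (by grind)]
  | one => rw [threeTerm_one, coeff_X, if_neg (by grind)]
  | more n ih ih' =>
    rw [threeTerm_add_two, coeff_add, coeff_C_mul, ih (by grind), mul_zero, add_zero]
    rcases k with _ | k
    · exact coeff_X_mul_zero _
    · rw [coeff_X_mul, ih' (by grind)]

lemma expand_contract_threeTerm (m : ℕ) :
    expand R 2 (contract 2 (threeTerm c (2 * m))) = threeTerm c (2 * m) := by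
  ext k
  rw [coeff_expand two_pos]
  split_ifs with hk
  · rw [coeff_contract two_ne_zero, Nat.div_mul_cancel hk]
  · exact (coeff_threeTerm_eq_zero_of_odd (by grind)).symm

lemma isUnit_coeff_zero_threeTerm (hc : ∀ n, IsUnit (c n)) (m : ℕ) :
    IsUnit ((threeTerm c (2 * m)).coeff 0) := by
  induction m with
  | zero => simp
  | succ m ih =>
    rw [show 2 * (m + 1) = 2 * m + 2 by ring, threeTerm_add_two, coeff_add, coeff_X_mul_zero,
      zero_add, coeff_C_mul]
    exact (hc _).mul ih

end ThreeTerm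

section CharTwo

variable {R : Type*} [CommRing R] [CharP R 2]

lemma threeTerm_one_cassini (n : ℕ) :
    threeTerm (1 : ℕ → R) (n + 2) * threeTerm 1 n + threeTerm 1 (n + 1) ^ 2 = 1 := by
  have h2 : (2 : R[X]) = 0 := CharTwo.two_eq_zero
  induction n with
  | zero =>
    simp only [threeTerm_add_two, Pi.one_apply, map_one, zero_add, threeTerm_one, threeTerm_zero]
    linear_combination X ^ 2 * h2
  | succ n ih =>
    simp only [threeTerm_add_two, Pi.one_apply, map_one, one_mul] at ih ⊢
    linear_combination ih + (X * threeTerm 1 (n + 1) * threeTerm 1 n +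
      X ^ 2 * threeTerm 1 (n + 1) ^ 2) * h2

lemma threeTerm_one_cassini_gap_two (n : ℕ) :
    threeTerm (1 : ℕ → R) (n + 4) * threeTerm 1 n + threeTerm 1 (n + 2) ^ 2 = X ^ 2 := by
  have h2 : (2 : R[X]) = 0 := CharTwo.two_eq_zero
  have := threeTerm_one_cassini (R := R) n
  simp only [threeTerm_add_two, Pi.one_apply, map_one, one_mul] at this ⊢
  linear_combination X ^ 2 * this + (2 * X * threeTerm 1 (n + 1) * threeTerm 1 n +
    threeTerm 1 n ^ 2) * h2

lemma separable_contract_threeTerm_one (m : ℕ) :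
    (contract 2 (threeTerm (1 : ℕ → R) (2 * m))).Separable := by
  set s : ℕ → R[X] := fun k ↦ contract 2 (threeTerm 1 (2 * k)) with hs
  have key : s (m + 2) * s m + s (m + 1) ^ 2 = X := by
    apply expand_injective two_pos
    simp only [hs, map_add, map_mul, map_pow, expand_contract_threeTerm, expand_X]
    rw [mul_add, mul_add, mul_one, ← threeTerm_one_cassini_gap_two (2 * m)]
  have h := congrArg derivative key
  rw [derivative_add, derivative_mul, derivative_sq, derivative_X,
    show (C 2 : R[X]) = 0 by rw [CharTwo.two_eq_zero, C_0]] at h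
  exact ⟨derivative (s (m + 2)), s (m + 2), by linear_combination h⟩

end CharTwo

theorem squarefree_map_threeTerm_two_mul {c : ℕ → ℤ} (hc : ∀ n, IsUnit (c n)) (m : ℕ) :
    Squarefree ((threeTerm c (2 * m)).map (Int.castRingHom ℚ)) := by
  set S : ℤ[X] := contract 2 (threeTerm c (2 * m))
  have hS : S.Monic := by
    rw [← monic_expand_iff two_pos, expand_contract_threeTerm]
    exact monic_threeTerm _
  have hc2 : Int.castRingHom (ZMod 2) ∘ c = 1 := by
    funext n
    obtain h | h := Int.isUnit_iff.1 (hc n) <;> simp [h]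
  have hS2 : (S.map (Int.castRingHom (ZMod 2))).Separable := by
    rw [map_contract two_ne_zero, map_threeTerm, hc2]
    exact separable_contract_threeTerm_one m
  have hSQ : (S.map (Int.castRingHom ℚ)).Separable :=
    hS.separable_map_of_separable_map hS2 (RingHom.injective_int _)
  have h0 : (S.map (Int.castRingHom ℚ)).coeff 0 ≠ 0 := by
    rw [coeff_map, coeff_contract two_ne_zero, zero_mul]
    simpa using (isUnit_coeff_zero_threeTerm hc m).ne_zero
  rw [← expand_contract_threeTerm m, map_expand]
  exact (separable_expand two_ne_zero hSQ h0).squarefree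

end Polynomial

theorem stmt11_general (r s : ℕ) (hr : Odd r)
    (ε : ℕ → ℤ) (hεdef : ∀ n, ε n = (-1) ^ ((n * s) / r))
    (P : ℕ → Polynomial ℚ) (hP0 : P 0 = 1) (hP1 : P 1 = X)
    (hrec : ∀ n, 1 ≤ n →
      P (n + 1) = X * P n + C ((ε n * ε (n + 1) : ℤ) : ℚ) * P (n - 1)) :
    Squarefree (P (r - 1)) := by
  have hε : ∀ n, IsUnit (ε n) := fun n ↦ hεdef n ▸ isUnit_neg_one.pow _
  let c : ℕ → ℤ := fun n ↦ ε n * ε (n + 1)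
  have hP : ∀ n, P n = (threeTerm c n).map (Int.castRingHom ℚ) := fun n ↦ by
    rw [map_threeTerm]
    refine eq_threeTerm hP0 hP1 (fun n ↦ ?_) n
    rw [hrec (n + 1) n.succ_pos, Nat.add_sub_cancel]
    simp [c]
  obtain ⟨m, rfl⟩ := hr
  rw [Nat.add_sub_cancel, hP]
  exact squarefree_map_threeTerm_two_mul (fun n ↦ (hε n).mul (hε (n + 1))) m

/-- with `ε_n = (-1)^⌊ns/r⌋` for `r, s` odd coprime, `0 < s < r`, and `P_n`
defined by `P_{n+1} = X P_n + ε_n ε_{n+1} P_{n-1}`, `P_0 = 1`, `P_1 = X` over `ℚ`,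
the polynomial `P_{r-1}` is squarefree (has simple roots). -/
theorem stmt11 (r s : ℕ) (hr : Odd r) (hs : Odd s) (hco : Nat.Coprime s r)
    (hs0 : 0 < s) (hsr : s < r)
    (ε : ℕ → ℤ) (hεdef : ∀ n, ε n = (-1) ^ ((n * s) / r))
    (P : ℕ → Polynomial ℚ) (hP0 : P 0 = 1) (hP1 : P 1 = X)
    (hrec : ∀ n, 1 ≤ n →
      P (n + 1) = X * P n + C ((ε n * ε (n + 1) : ℤ) : ℚ) * P (n - 1)) :
    Squarefree (P (r - 1)) :=
  stmt11_general r s hr ε hεdef P hP0 hP1 hrec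
end

section
/- Let V be a finite-dimensional commutative ℚ-algebra with a linear form ε: V → ℚ such that η(x,y) = ε(xy) is non-degenerate, and suppose V is semisimple (the trace form (x,y) ↦ tr_V(xy) is non-degenerate, where tr_V(x) is the trace of multiplication by x). Then there exists a unique invertible α ∈ V with ε(x) = tr_V(αx) for all x, and the element Ω = ∑ x_i y_i, where η^{-1} = ∑ x_i ⊗ y_i ∈ V ⊗ V, satisfies Ω = α^{-1}. -/
/-!
Writing `Ω = ∑ xᵢ yᵢ`, the reproducing property `a = ∑ ε(a xᵢ) yᵢ` expresses multiplication by
`v` as a sum of rank-one maps, whence `tr_V(v) = ε(v Ω)`. So `ε(v) = tr_V(α v)` for all `v` says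
`ε(v) = ε(v Ω α)` for all `v`, i.e. `Ω α = 1` by non-degeneracy of `η`; this gives invertibility
and uniqueness of `α`, while its existence is the non-degeneracy of the trace form.
-/

open LinearMap

theorem trace_mulLeft_eq_of_reproducing {R A ι : Type*} [CommRing R] [CommRing A] [Algebra R A]
    [Module.Free R A] [Module.Finite R A] [Fintype ι] (ε : A →ₗ[R] R) (x y : ι → A)
    (hinv : ∀ a : A, ∑ i, ε (a * x i) • y i = a) (v : A) :
    trace R A (mulLeft R v) = ε (v * ∑ i, x i * y i) := by
  have hdecomp : mulLeft R v = ∑ i, (ε ∘ₗ mulLeft R (x i)).smulRight (v * y i) := by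
    ext a
    conv_lhs => rw [mulLeft_apply, ← hinv a, Finset.mul_sum]
    simp only [LinearMap.sum_apply, smulRight_apply, comp_apply, mulLeft_apply, mul_smul_comm,
      mul_comm a]
  simp only [hdecomp, map_sum, trace_smulRight, comp_apply, mulLeft_apply, Finset.mul_sum,
    mul_left_comm (x _)]

theorem eq_zero_of_forall_map_mul_eq_zero {R A ι : Type*} [CommRing R] [Ring A]
    [Algebra R A] [Fintype ι] (ε : A →ₗ[R] R) (x y : ι → A)
    (hinv : ∀ a : A, ∑ i, ε (a * x i) • y i = a) {v : A} (hv : ∀ w, ε (v * w) = 0) : v = 0 := by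
  rw [← hinv v]
  simp only [hv, zero_smul, Finset.sum_const_zero]

theorem sum_mul_mul_eq_one_of_forall_eq_trace {R A ι : Type*} [CommRing R] [CommRing A]
    [Algebra R A] [Module.Free R A] [Module.Finite R A] [Fintype ι] (ε : A →ₗ[R] R) (x y : ι → A)
    (hinv : ∀ a : A, ∑ i, ε (a * x i) • y i = a) (α : A)
    (hα : ∀ v, ε v = trace R A (mulLeft R (α * v))) :
    (∑ i, x i * y i) * α = 1 := by
  refine sub_eq_zero.mp <| eq_zero_of_forall_map_mul_eq_zero ε x y hinv fun w => ?_
  rw [sub_mul, one_mul, map_sub, sub_eq_zero, hα w, trace_mulLeft_eq_of_reproducing ε x y hinv]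
  congr 1
  ring

theorem Algebra.exists_forall_eq_trace_mul {K A : Type*} [Field K] [CommRing A] [Algebra K A]
    [FiniteDimensional K A] (hT : (Algebra.traceForm K A).SeparatingLeft) (f : Module.Dual K A) :
    ∃ α : A, ∀ v, f v = Algebra.trace K A (α * v) :=
  ⟨_, fun v => (BilinForm.apply_toDual_symm_apply (hB := .ofSeparatingLeft hT) f v).symm⟩

theorem stmt12_general (V : Type*) [CommRing V] [Algebra ℚ V] [FiniteDimensional ℚ V]
    (ε : V →ₗ[ℚ] ℚ)
    (hss : ∀ v : V,
      (∀ w : V, LinearMap.trace ℚ V (LinearMap.mulLeft ℚ (v * w)) = 0) → v = 0)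
    (ι : Type*) [Fintype ι] (x y : ι → V)
    (hinv : ∀ a : V, ∑ i, ε (a * x i) • y i = a) :
    (∃! α : V, IsUnit α ∧
        ∀ v : V, ε v = LinearMap.trace ℚ V (LinearMap.mulLeft ℚ (α * v))) ∧
      ∀ α : V, (IsUnit α ∧
          ∀ v : V, ε v = LinearMap.trace ℚ V (LinearMap.mulLeft ℚ (α * v))) →
        (∑ i, x i * y i) * α = 1 := by
  have hΩ := sum_mul_mul_eq_one_of_forall_eq_trace ε x y hinv
  obtain ⟨α, hα⟩ := Algebra.exists_forall_eq_trace_mul hss ε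
  have hΩα : (∑ i, x i * y i) * α = 1 := hΩ α hα
  refine ⟨⟨α, ⟨.of_mul_eq_one_right _ hΩα, hα⟩, fun β hβ => ?_⟩, fun β hβ => hΩ β hβ.2⟩
  exact (IsUnit.of_mul_eq_one _ hΩα).mul_left_cancel ((hΩ β hβ.2).trans hΩα.symm)

/-- let `V` be a finite-dimensional commutative `ℚ`-algebra with a linear
form `ε` such that `η(x,y) = ε(xy)` is non-degenerate, and suppose `V` is semisimple
(the trace form is non-degenerate). Then there is a unique invertible `α ∈ V` with
`ε(x) = tr_V(αx)` for all `x`, and the element `Ω = ∑ xᵢ yᵢ` (where `∑ xᵢ ⊗ yᵢ` is the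
inverse tensor of `η`, encoded by the reproducing property `∑ ε(a xᵢ) yᵢ = a`) satisfies
`Ω = α⁻¹`, i.e. `Ω α = 1`. -/
theorem stmt12 (V : Type*) [CommRing V] [Algebra ℚ V] [FiniteDimensional ℚ V]
    (ε : V →ₗ[ℚ] ℚ) (hnd : ∀ v : V, (∀ w : V, ε (v * w) = 0) → v = 0)
    (hss : ∀ v : V,
      (∀ w : V, LinearMap.trace ℚ V (LinearMap.mulLeft ℚ (v * w)) = 0) → v = 0)
    (ι : Type*) [Fintype ι] (x y : ι → V)
    (hinv : ∀ a : V, ∑ i, ε (a * x i) • y i = a) :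
    (∃! α : V, IsUnit α ∧
        ∀ v : V, ε v = LinearMap.trace ℚ V (LinearMap.mulLeft ℚ (α * v))) ∧
      ∀ α : V, (IsUnit α ∧
          ∀ v : V, ε v = LinearMap.trace ℚ V (LinearMap.mulLeft ℚ (α * v))) →
        (∑ i, x i * y i) * α = 1 :=
  stmt12_general V ε hss ι x y hinv
end

section
/- Let V_q be the Frobenius algebra with ℚ-basis e_0,…,e_{r-2}, pairing η(e_i,e_j) = δ_{ij}(-1)^i ε_{i+1}, and multiplication determined by ω(x,y,z) = η(xy,z) with ω(e_i,e_j,e_k) = sign⟨i,j,k⟩ for r-admissible triples. Setting ι = e_{r-2}, one has ι·e_n = (-1)^n ε_{n+1} e_{r-2-n} for all 0 ≤ n ≤ r-2, and in particular ι² = -1. -/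
open Finset

attribute [local instance] Classical.propDecidable

/-- The quantum integer `[n] = sin(πns/r)/sin(πs/r)` for `q = exp(iπs/r)`. -/
noncomputable def qint (r s n : ℕ) : ℝ :=
  Real.sin (Real.pi * n * s / r) / Real.sin (Real.pi * s / r)

/-- The quantum factorial `[n]! = [n][n-1]⋯[1]`. -/
noncomputable def qfact (r s n : ℕ) : ℝ := ∏ m ∈ Finset.Icc 1 n, qint r s m

/-- `(i,j,k)` is `r`-admissible: triangle inequalities, `i+j+k` even, `i+j+k ≤ 2r-4`. -/
def rAdmissible (r i j k : ℕ) : Prop :=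
  i ≤ j + k ∧ j ≤ i + k ∧ k ≤ i + j ∧ Even (i + j + k) ∧ i + j + k ≤ 2 * r - 4

/-- `⟨i,j,k⟩ = (-1)^{a+b+c} [a+b+c+1]![a]![b]![c]! / ([a+b]![a+c]![b+c]!)` where
`i = b+c`, `j = a+c`, `k = a+b`. -/
noncomputable def qbracket (r s i j k : ℕ) : ℝ :=
  let a := (j + k - i) / 2
  let b := (i + k - j) / 2
  let c := (i + j - k) / 2
  (-1 : ℝ) ^ (a + b + c) * qfact r s (a + b + c + 1) * qfact r s a * qfact r s b *
      qfact r s c / (qfact r s (a + b) * qfact r s (a + c) * qfact r s (b + c))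

/-- The sign of a real number, valued in `ℚ`. -/
noncomputable def rsign (x : ℝ) : ℚ := if 0 < x then 1 else if x < 0 then -1 else 0

/-! For `k ≤ r - 2` the triple `(r - 2, n, k)` is admissible only for `k = r - 2 - n`, so
`ι e_n` pairs non-trivially only with `e_{r-2-n}`, with value `sign⟨r-2, n, r-2-n⟩ = -1`.
Since `η(e_{r-2-n}, e_{r-2-n}) = (-1)^{r-2-n} ε_{n+1}` (by `[r - m] = [m]` for odd `s`) and
`ε_{n+1}² = 1`, the element `(-1)^n ε_{n+1} e_{r-2-n}` has the same pairings, as `r - 2` is odd;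
non-degeneracy of `η` gives the identity, and `n = r - 2` with `e_0 = 1` gives `ι² = -1`. -/

open Real

lemma sin_pi_mul_mul_div_ne_zero {r s m : ℕ} (hco : s.Coprime r) (hm : 0 < m) (hmr : m < r) :
    sin (π * m * s / r) ≠ 0 := by
  intro h
  obtain ⟨n, hn⟩ := sin_eq_zero_iff.mp h
  have hr : (r : ℝ) ≠ 0 := by exact_mod_cast (by omega : r ≠ 0)
  have hms : ((m * s : ℕ) : ℤ) = n * r := by
    rw [eq_div_iff hr] at hn
    exact_mod_cast (mul_left_cancel₀ pi_ne_zero (by linarith) : (m * s : ℝ) = n * r)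
  have hdvd : r ∣ m :=
    hco.symm.dvd_of_dvd_mul_right (Int.natCast_dvd_natCast.mp ⟨n, by rw [hms, mul_comm]⟩)
  exact absurd (Nat.le_of_dvd hm hdvd) (by omega)

lemma qint_ne_zero {r s m : ℕ} (hco : s.Coprime r) (hm : 0 < m) (hmr : m < r) :
    qint r s m ≠ 0 :=
  div_ne_zero (sin_pi_mul_mul_div_ne_zero hco hm hmr)
    (by simpa using sin_pi_mul_mul_div_ne_zero (m := 1) hco one_pos (by omega))

lemma qint_one {r s : ℕ} (hco : s.Coprime r) (hr : 1 < r) : qint r s 1 = 1 := by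
  simpa [qint] using qint_ne_zero hco one_pos hr

lemma qint_sub {r s m : ℕ} (hs : Odd s) (hmr : m ≤ r) : qint r s (r - m) = qint r s m := by
  obtain rfl | hr := r.eq_zero_or_pos
  · obtain rfl : m = 0 := by omega
    rfl
  obtain ⟨t, rfl⟩ := hs
  have hsplit : π * ((r - m : ℕ) : ℝ) * (2 * t + 1 : ℕ) / r
      = (π - π * m * (2 * t + 1 : ℕ) / r) + t * (2 * π) := by
    push_cast [Nat.cast_sub hmr]
    field_simp
    ring
  rw [qint, qint, hsplit, sin_add_nat_mul_two_pi, sin_pi_sub]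

lemma qfact_ne_zero {r s m : ℕ} (hco : s.Coprime r) (hmr : m < r) : qfact r s m ≠ 0 :=
  prod_ne_zero_iff.mpr fun x hx => by
    rw [mem_Icc] at hx
    exact qint_ne_zero hco (by omega) (by omega)

lemma rsign_mul_self {x : ℝ} (hx : x ≠ 0) : rsign x * rsign x = 1 := by
  rcases hx.lt_or_gt with h | h
  · simp [rsign, h, h.not_gt]
  · simp [rsign, h]

lemma rAdmissible_sub_two_iff {r n k : ℕ} (hn : n ≤ r - 2) (hk : k ≤ r - 2) :
    rAdmissible r (r - 2) n k ↔ n + k = r - 2 := by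
  simp only [rAdmissible, Nat.even_iff]
  omega

-- With `i = r - 2`, `j = n`, `k = r - 2 - n` one has `a = 0`, `b = r - 2 - n`, `c = n`,
-- and everything cancels except `[r - 1]! / [r - 2]! = [r - 1]`.
lemma qbracket_sub_two {r s n : ℕ} (hco : s.Coprime r) (hn : n ≤ r - 2) (hr : 2 ≤ r) :
    qbracket r s (r - 2) n (r - 2 - n) = (-1) ^ (r - 2) * qint r s (r - 1) := by
  have ha : (n + (r - 2 - n) - (r - 2)) / 2 = 0 := by omega
  have hb : (r - 2 + (r - 2 - n) - n) / 2 = r - 2 - n := by omega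
  have hc : (r - 2 + n - (r - 2 - n)) / 2 = n := by omega
  have habc : r - 2 - n + n = r - 2 := by omega
  have hsucc : qfact r s (r - 2 + 1) = qfact r s (r - 2) * qint r s (r - 1) := by
    rw [show r - 1 = r - 2 + 1 by omega]
    exact prod_Icc_succ_top (by omega) _
  have h0 : qfact r s 0 = 1 := by simp [qfact]
  have hX := qfact_ne_zero (m := r - 2 - n) hco (by omega)
  have hY := qfact_ne_zero (m := n) hco (by omega)
  have hZ := qfact_ne_zero (m := r - 2) hco (by omega)
  simp only [qbracket, ha, hb, hc, zero_add, habc, hsucc, h0]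
  field_simp

lemma qint_sub_one {r s : ℕ} (hs : Odd s) (hco : s.Coprime r) (hr : 1 < r) :
    qint r s (r - 1) = 1 := by
  rw [qint_sub hs hr.le, qint_one hco hr]

lemma rsign_qbracket_sub_two {r s n : ℕ} (hr : Odd r) (hs : Odd s) (hco : s.Coprime r)
    (hr2 : 2 ≤ r) (hn : n ≤ r - 2) : rsign (qbracket r s (r - 2) n (r - 2 - n)) = -1 := by
  rw [qbracket_sub_two hco hn hr2, qint_sub_one hs hco (by omega),
    (Nat.Odd.sub_even hr2 hr even_two).neg_one_pow]
  norm_num [rsign]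

theorem stmt14_general (r s : ℕ) (hr : Odd r) (hs : Odd s) (hco : Nat.Coprime s r)
    (hr3 : 3 ≤ r)
    (ε : ℕ → ℚ) (hε : ∀ n, ε n = rsign (qint r s n))
    (V : Type*) [CommRing V] [Algebra ℚ V]
    (e : ℕ → V) (he0 : e 0 = 1)
    (η : V →ₗ[ℚ] V →ₗ[ℚ] ℚ)
    (hη : ∀ i ≤ r - 2, ∀ j ≤ r - 2,
      η (e i) (e j) = if i = j then (-1) ^ i * ε (i + 1) else 0)
    (hω : ∀ i ≤ r - 2, ∀ j ≤ r - 2, ∀ k ≤ r - 2,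
      η (e i * e j) (e k) =
        if rAdmissible r i j k then rsign (qbracket r s i j k) else 0)
    (hnd : ∀ v : V, (∀ k ≤ r - 2, η v (e k) = 0) → v = 0) :
    (∀ n ≤ r - 2, e (r - 2) * e n = (((-1 : ℚ) ^ n * ε (n + 1))) • e (r - 2 - n)) ∧
      e (r - 2) * e (r - 2) = -1 := by
  have hodd : Odd (r - 2) := Nat.Odd.sub_even (by omega) hr even_two
  have hε_refl : ∀ n ≤ r - 2, ε (r - 2 - n + 1) = ε (n + 1) ∧ ε (n + 1) * ε (n + 1) = 1 :=
    fun n hn => by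
      rw [hε, hε, show r - 2 - n + 1 = r - (n + 1) by omega, qint_sub hs (by omega)]
      exact ⟨rfl, rsign_mul_self (qint_ne_zero hco (by omega) (by omega))⟩
  have hmul : ∀ n ≤ r - 2, e (r - 2) * e n = ((-1 : ℚ) ^ n * ε (n + 1)) • e (r - 2 - n) := by
    intro n hn
    rw [← sub_eq_zero]
    refine hnd _ fun k hk => ?_
    rw [map_sub, LinearMap.sub_apply, map_smul, LinearMap.smul_apply, hω _ le_rfl n hn k hk,
      hη _ (by omega) k hk, rAdmissible_sub_two_iff hn hk]
    by_cases hkn : k = r - 2 - n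
    · subst hkn
      obtain ⟨hε_sym, hε_sq⟩ := hε_refl n hn
      have hsign : (-1 : ℚ) ^ n * (-1) ^ (r - 2 - n) = -1 := by
        rw [← pow_add, Nat.add_sub_cancel' hn, hodd.neg_one_pow]
      rw [if_pos (by omega), if_pos rfl, rsign_qbracket_sub_two hr hs hco (by omega) hn, hε_sym,
        smul_eq_mul]
      linear_combination hε_sq - ε (n + 1) ^ 2 * hsign
    · rw [if_neg (by omega), if_neg (Ne.symm hkn), smul_zero, sub_zero]
  have hε_top : ε (r - 2 + 1) = 1 := by
    rw [hε, show r - 2 + 1 = r - 1 by omega, qint_sub_one hs hco (by omega)]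
    norm_num [rsign]
  refine ⟨hmul, ?_⟩
  rw [hmul _ le_rfl, Nat.sub_self, he0, hε_top, hodd.neg_one_pow]
  norm_num

/-- in the Frobenius algebra `V_q` with basis `e_0, …, e_{r-2}`, pairing
`η(e_i, e_j) = δ_{ij} (-1)^i ε_{i+1}` and multiplication determined (via the
non-degenerate pairing) by `η(e_i e_j, e_k) = sign⟨i,j,k⟩` for `r`-admissible triples
(`0` otherwise), the element `ι = e_{r-2}` satisfies `ι e_n = (-1)^n ε_{n+1} e_{r-2-n}`
for all `0 ≤ n ≤ r-2`, and in particular `ι² = -1`. -/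
theorem stmt14 (r s : ℕ) (hr : Odd r) (hs : Odd s) (hco : Nat.Coprime s r)
    (hs0 : 0 < s) (hsr : s < r) (hr3 : 3 ≤ r)
    (ε : ℕ → ℚ) (hε : ∀ n, ε n = rsign (qint r s n))
    (V : Type*) [CommRing V] [Algebra ℚ V]
    (e : ℕ → V) (he0 : e 0 = 1)
    (η : V →ₗ[ℚ] V →ₗ[ℚ] ℚ)
    (hη : ∀ i ≤ r - 2, ∀ j ≤ r - 2,
      η (e i) (e j) = if i = j then (-1) ^ i * ε (i + 1) else 0)
    (hω : ∀ i ≤ r - 2, ∀ j ≤ r - 2, ∀ k ≤ r - 2,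
      η (e i * e j) (e k) =
        if rAdmissible r i j k then rsign (qbracket r s i j k) else 0)
    (hnd : ∀ v : V, (∀ k ≤ r - 2, η v (e k) = 0) → v = 0) :
    (∀ n ≤ r - 2, e (r - 2) * e n = (((-1 : ℚ) ^ n * ε (n + 1))) • e (r - 2 - n)) ∧
      e (r - 2) * e (r - 2) = -1 :=
  stmt14_general r s hr hs hco hr3 ε hε V e he0 η hη hω hnd
end

section
/- Let χ ∈ ℤ[t] be a monic polynomial whose complex roots all have strictly positive real part and whose roots sum to 1 (i.e., the coefficient of t^{deg-1} is -1). Then χ is irreducible over ℚ. -/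
/-!
For a monic polynomial the subleading coefficient is minus the sum of the roots, so every monic
integer factor of positive degree of `χ` has a negative, hence `≤ -1`, subleading coefficient.
Two such factors would make the subleading coefficient of `χ` at most `-2`, not `-1`; by Gauss's
lemma irreducibility over `ℤ` gives irreducibility over `ℚ`.
-/

open Polynomial

namespace Polynomial

theorem Monic.re_nextCoeff_neg_of_forall_re_pos {P : ℂ[X]} (hP : P.Monic) (hdeg : 0 < P.natDegree)
    (hroots : ∀ z, P.IsRoot z → 0 < z.re) : P.nextCoeff.re < 0 := by
  have hne : P.roots ≠ 0 := by
    rwa [← Multiset.card_pos, IsAlgClosed.card_roots_eq_natDegree]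
  have hsum : 0 < (P.roots.map Complex.re).sum := by
    simpa using Multiset.sum_lt_sum_of_nonempty (f := fun _ => (0 : ℝ)) hne
      fun z hz => hroots z (isRoot_of_mem_roots hz)
  have hre : P.roots.sum.re = (P.roots.map Complex.re).sum :=
    map_multiset_sum Complex.reAddGroupHom _
  rw [(IsAlgClosed.splits P).nextCoeff_eq_neg_sum_roots_of_monic hP, Complex.neg_re, hre]
  linarith

theorem Monic.nextCoeff_neg_of_forall_re_pos {P : ℤ[X]} (hP : P.Monic) (hdeg : 0 < P.natDegree)
    (hroots : ∀ z : ℂ, aeval z P = 0 → 0 < z.re) : P.nextCoeff < 0 := by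
  have h := (hP.map (Int.castRingHom ℂ)).re_nextCoeff_neg_of_forall_re_pos
    (by rwa [hP.natDegree_map]) fun z hz => hroots z (by rwa [aeval_def, eval₂_eq_eval_map])
  rw [nextCoeff_map Int.cast_injective] at h
  simpa using h

theorem Monic.irreducible_of_nextCoeff_eq_neg_one_of_forall_re_pos {χ : ℤ[X]} (hχ : χ.Monic)
    (hroots : ∀ z : ℂ, aeval z χ = 0 → 0 < z.re) (hnext : χ.nextCoeff = -1) :
    Irreducible χ := by
  refine hχ.irreducible_iff_natDegree.2
    ⟨by rintro rfl; simp [nextCoeff] at hnext, fun f g hf hg hfg => ?_⟩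
  by_contra! hdeg
  have hroots_of_dvd {P : ℤ[X]} (hP : P ∣ χ) (z : ℂ) (hz : aeval z P = 0) : 0 < z.re := by
    obtain ⟨Q, rfl⟩ := hP
    exact hroots z (by rw [map_mul, hz, zero_mul])
  have hf_neg := hf.nextCoeff_neg_of_forall_re_pos (Nat.pos_of_ne_zero hdeg.1)
    (hroots_of_dvd ⟨g, hfg.symm⟩)
  have hg_neg := hg.nextCoeff_neg_of_forall_re_pos (Nat.pos_of_ne_zero hdeg.2)
    (hroots_of_dvd ⟨f, by rw [← hfg, mul_comm]⟩)
  have hmul := hf.nextCoeff_mul hg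
  rw [hfg, hnext] at hmul
  omega

end Polynomial

/-- a monic integer polynomial whose complex roots all have strictly
positive real part and whose roots sum to `1` (i.e. the subleading coefficient is `-1`)
is irreducible over `ℚ`. -/
theorem stmt17 (χ : Polynomial ℤ) (hmonic : χ.Monic)
    (hroots : ∀ z : ℂ, Polynomial.aeval z χ = 0 → 0 < z.re)
    (hcoeff : χ.coeff (χ.natDegree - 1) = -1) :
    Irreducible (χ.map (Int.castRingHom ℚ)) := by
  have hdeg : 0 < χ.natDegree := by
    by_contra! h
    -- then `χ = 1`, and `hcoeff` reads `χ.coeff 0 = -1` since `0 - 1 = 0` in `ℕ`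
    rw [Nat.le_zero.1 h] at hcoeff
    have := hmonic.coeff_natDegree
    simp_all
  have hnext : χ.nextCoeff = -1 := by rwa [nextCoeff_of_natDegree_pos hdeg]
  exact hmonic.irreducible_iff_irreducible_map_fraction_map.1
    (hmonic.irreducible_of_nextCoeff_eq_neg_one_of_forall_re_pos hroots hnext)
end
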